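/- Let q be a real number with q > φ. Then the inequality f_h ≤ S(q, h+1)/q holds for every natural number h if and only if q ≤ 1 + √3. -/
import Mathlib


/-- The Fibonacci-like sequence with `f 0 = f 1 = 1`. -/
def fib1 : ℕ → ℕ
  | 0 => 1
  | 1 => 1
  | n + 2 => fib1 (n + 1) + fib1 n

/-- The golden ratio. -/
noncomputable def phi : ℝ := (1 + Real.sqrt 5) / 2

/-- `S q h = ∑_{k=0}^∞ f_{h+k} / q^k`. -/
noncomputable def S (q : ℝ) (h : ℕ) : ℝ := ∑' k : ℕ, (fib1 (h + k) : ℝ) / q ^ k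

lemma phi_pos : 0 < phi := by
  have : 0 ≤ Real.sqrt 5 := Real.sqrt_nonneg 5
  unfold phi; linarith

lemma one_lt_phi : 1 < phi := by
  have : (2:ℝ) ≤ Real.sqrt 5 := by
    nlinarith [Real.sq_sqrt (by norm_num : (5:ℝ) ≥ 0), Real.sqrt_nonneg 5]
  unfold phi; linarith

lemma phi_sq : phi ^ 2 = phi + 1 := by
  have h5 : Real.sqrt 5 ^ 2 = 5 := Real.sq_sqrt (by norm_num)
  unfold phi; nlinarith [h5]

lemma fib1_pos (n : ℕ) : 0 < fib1 n := by
  induction n using Nat.strong_induction_on with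
  | _ n ih =>
    match n with
    | 0 => simp [fib1]
    | 1 => simp [fib1]
    | n + 2 =>
      have h1 := ih (n+1) (by omega)
      have h2 := ih n (by omega)
      simp [fib1]; omega

lemma fib1_le_succ (n : ℕ) : fib1 n ≤ fib1 (n + 1) := by
  cases n with
  | zero => simp [fib1]
  | succ m =>
    exact Nat.le_add_right _ _

lemma fib1_le_phi_pow (n : ℕ) : (fib1 n : ℝ) ≤ phi ^ n := by
  induction n using Nat.strong_induction_on with
  | _ n ih =>
    match n with
    | 0 => simp [fib1]
    | 1 => simp [fib1]; linarith [one_lt_phi]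
    | n + 2 =>
      have h1 := ih (n+1) (by omega)
      have h2 := ih n (by omega)
      have : phi ^ (n+2) = phi ^ n * (phi + 1) := by rw [← phi_sq]; ring
      have hfib : (fib1 (n+2) : ℝ) = (fib1 (n+1) : ℝ) + fib1 n := by
        simp [fib1]
      rw [hfib, this]
      have hps : phi ^ n * (phi + 1) = phi ^ (n + 1) + phi ^ n := by
        rw [pow_succ]; ring
      rw [hps]
      linarith

lemma summable_S {q : ℝ} (hq : phi < q) (h : ℕ) :
    Summable (fun k : ℕ => (fib1 (h + k) : ℝ) / q ^ k) := by
  have hq0 : 0 < q := lt_trans phi_pos hq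
  have hr0 : 0 ≤ phi / q := div_nonneg phi_pos.le hq0.le
  have hr1 : phi / q < 1 := (div_lt_one hq0).mpr hq
  have hg : Summable (fun k : ℕ => phi ^ h * (phi / q) ^ k) :=
    (summable_geometric_of_lt_one hr0 hr1).mul_left _
  refine Summable.of_nonneg_of_le (fun k => ?_) (fun k => ?_) hg
  · positivity
  · have h1 : (fib1 (h + k) : ℝ) ≤ phi ^ (h + k) := fib1_le_phi_pow _
    have h2 : (0:ℝ) < q ^ k := pow_pos hq0 k
    rw [div_le_iff₀ h2]
    calc (fib1 (h + k) : ℝ) ≤ phi ^ (h + k) := h1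
      _ = phi ^ h * (phi / q) ^ k * q ^ k := by
          rw [pow_add, div_pow, mul_assoc, div_mul_cancel₀]
          exact pow_ne_zero _ hq0.ne'
      _ ≤ _ := le_refl _

lemma S_shift {q : ℝ} (hq : phi < q) (h : ℕ) :
    S q h = (fib1 h : ℝ) + S q (h + 1) / q := by
  have hq0 : 0 < q := lt_trans phi_pos hq
  have hs := summable_S hq h
  have := Summable.tsum_eq_zero_add hs
  unfold S
  rw [this]
  simp only [add_zero, pow_zero, div_one]
  congr 1
  have : ∀ k : ℕ, (fib1 (h + (k + 1)) : ℝ) / q ^ (k + 1)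
      = (fib1 (h + 1 + k) : ℝ) / q ^ k * (1 / q) := by
    intro k
    rw [pow_succ]
    have : h + (k + 1) = h + 1 + k := by omega
    rw [this]
    field_simp
  simp_rw [this]
  rw [tsum_mul_right]
  ring

lemma S_rec {q : ℝ} (hq : phi < q) (h : ℕ) :
    S q (h + 2) = S q (h + 1) + S q h := by
  unfold S
  rw [← Summable.tsum_add (summable_S hq (h+1)) (summable_S hq h)]
  congr 1
  funext k
  have h1 : h + 2 + k = (h + 1 + k) + 1 := by omega
  have h2 : h + 1 + k = (h + k) + 1 := by omega
  rw [h1, show fib1 ((h+1+k)+1) = fib1 (h+1+k) + fib1 (h+k) by rw [h2]; rfl]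
  push_cast
  rw [add_div]

lemma S_closed {q : ℝ} (hq : phi < q) (h : ℕ) :
    S q (h + 1) * (q ^ 2 - q - 1) = q ^ 2 * (fib1 (h + 1) : ℝ) + q * (fib1 h : ℝ) := by
  have hq0 : 0 < q := lt_trans phi_pos hq
  have hA := S_shift hq h
  have hB := S_shift hq (h + 1)
  have hC := S_rec hq h
  have hA' : q * S q h = q * (fib1 h : ℝ) + S q (h + 1) := by
    rw [hA]; field_simp; try ring
  have hB' : q * S q (h + 1) = q * (fib1 (h + 1) : ℝ) + S q (h + 2) := by
    rw [hB]; field_simp; try ring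
  nlinarith [hA', hB', hC]

lemma disc_pos {q : ℝ} (hq : phi < q) : 0 < q ^ 2 - q - 1 := by
  have h5 : Real.sqrt 5 ^ 2 = 5 := Real.sq_sqrt (by norm_num)
  have h5' : 0 ≤ Real.sqrt 5 := Real.sqrt_nonneg 5
  have : (1 + Real.sqrt 5) / 2 < q := hq
  nlinarith

theorem stmt3 (q : ℝ) (hq : phi < q) :
    (∀ h : ℕ, (fib1 h : ℝ) ≤ S q (h + 1) / q) ↔ q ≤ 1 + Real.sqrt 3 := by
  have hq0 : 0 < q := lt_trans phi_pos hq
  have hD : 0 < q ^ 2 - q - 1 := disc_pos hq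
  have h3 : Real.sqrt 3 ^ 2 = 3 := Real.sq_sqrt (by norm_num)
  have h3' : 0 ≤ Real.sqrt 3 := Real.sqrt_nonneg 3
  have key : ∀ h : ℕ, ((fib1 h : ℝ) ≤ S q (h + 1) / q ↔
      (fib1 h : ℝ) * (q ^ 2 - q - 1) ≤ q * (fib1 (h + 1) : ℝ) + (fib1 h : ℝ)) := by
    intro h
    rw [le_div_iff₀ hq0]
    constructor
    · intro hle
      have := mul_le_mul_of_nonneg_right hle hD.le
      rw [S_closed hq h] at this
      nlinarith
    · intro hle
      have h2 : (fib1 h : ℝ) * q * (q ^ 2 - q - 1) ≤ S q (h + 1) * (q ^ 2 - q - 1) := by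
        rw [S_closed hq h]; nlinarith
      exact le_of_mul_le_mul_right h2 hD
  constructor
  · intro hall
    have h0 := (key 0).mp (hall 0)
    simp [fib1] at h0
    -- h0 : q^2 - q - 1 ≤ q + 1, i.e. q^2 ≤ 2q + 2
    by_contra hgt
    push_neg at hgt
    nlinarith
  · intro hle h
    rw [key h]
    have hf : (2 : ℝ) * fib1 h ≤ (fib1 (h + 2) : ℝ) := by
      have h1 : fib1 h ≤ fib1 (h + 1) := fib1_le_succ h
      have : fib1 (h + 2) = fib1 (h + 1) + fib1 h := rfl
      rw [this]; push_cast
      have : (fib1 h : ℝ) ≤ (fib1 (h+1) : ℝ) := by exact_mod_cast h1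
      linarith
    have hq1 : 1 < q := lt_trans one_lt_phi hq
    have hprod : (0:ℝ) ≤ (1 + Real.sqrt 3 - q) * (Real.sqrt 3 + q - 1) :=
      mul_nonneg (by linarith) (by linarith)
    have hq2 : q ^ 2 ≤ 2 * q + 2 := by nlinarith [hprod, h3]
    have hf2 : (fib1 (h + 2) : ℝ) = (fib1 (h + 1) : ℝ) + (fib1 h : ℝ) := by
      rw [show fib1 (h+2) = fib1 (h+1) + fib1 h from rfl]; push_cast; ring
    have hfp : (0:ℝ) < fib1 h := by exact_mod_cast fib1_pos h
    nlinarith [hf, hq2, hfp]
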